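/- arXiv:1003.4449 — 2 statements merged into one kernel-verified Lean document; each statement's English description precedes it below -/
import Mathlib

section
/- For a topological space X, the subgroup D^⊠ of the normalized cubical chain complex C_*(X), generated in each dimension i by the elements σ + σ ∘ φ_k where σ : [0,1]^i → X is a singular cube, 1 ≤ k < i, and φ_k is the self-homeomorphism of [0,1]^i transposing the k-th and (k+1)-st coordinates, is a subcomplex: the cubical boundary of any generator σ + σ ∘ φ_k again lies in D^⊠. -/
open unitInterval

/-- A singular cube of dimension `n` in `X`. -/
abbrev Cube (n : ℕ) (X : Type*) [TopologicalSpace X] := C((Fin n → I), X)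

/-- The face of a singular cube obtained by setting the `k`-th coordinate equal to `ε`. -/
noncomputable def cubeFace {X : Type*} [TopologicalSpace X] {n : ℕ}
    (c : Cube (n + 1) X) (k : Fin (n + 1)) (ε : I) : Cube n X :=
  c.comp ⟨fun t => (Fin.insertNth k ε t : Fin (n + 1) → I),
    Continuous.finInsertNth k continuous_const continuous_id⟩

/-- A cube is degenerate if it factors through the projection forgetting a coordinate. -/
def IsDegenerateCube {X : Type*} [TopologicalSpace X] {n : ℕ} (c : Cube n X) : Prop :=
  ∃ k : Fin n, ∀ (t : Fin n → I) (s : I), c t = c (Function.update t k s)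

/-- The cubical boundary `∂σ = ∑_{k=1}^{i} ∑_{ε=0,1} (-1)^{k+ε} σ ∘ δ_{k,ε}`. -/
noncomputable def cubeBoundary (X : Type*) [TopologicalSpace X] (n : ℕ) :
    FreeAbelianGroup (Cube (n + 1) X) →+ FreeAbelianGroup (Cube n X) :=
  FreeAbelianGroup.lift fun c =>
    ∑ k : Fin (n + 1), ((-1 : ℤ) ^ ((k : ℕ) + 1)) •
      (FreeAbelianGroup.of (cubeFace c k 0) - FreeAbelianGroup.of (cubeFace c k 1))

/-- Precomposition of a cube with the transposition of two coordinates. -/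
def transpCube {X : Type*} [TopologicalSpace X] {n : ℕ}
    (c : Cube n X) (a b : Fin n) : Cube n X :=
  c.comp ⟨fun t => t ∘ (Equiv.swap a b), by exact continuous_pi fun j => continuous_apply _⟩

/-- The subgroup of degenerate chains. -/
def DegenSub (X : Type*) [TopologicalSpace X] (n : ℕ) :
    AddSubgroup (FreeAbelianGroup (Cube n X)) :=
  AddSubgroup.closure { z | ∃ c : Cube n X, IsDegenerateCube c ∧ z = FreeAbelianGroup.of c }

/-- The subgroup `D^⊠` generated by the elements `σ + σ ∘ φ_k` for coordinate
transpositions `φ_k`, `1 ≤ k < n`. -/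
def Dboxslash (X : Type*) [TopologicalSpace X] (n : ℕ) :
    AddSubgroup (FreeAbelianGroup (Cube n X)) :=
  AddSubgroup.closure { z | ∃ (c : Cube n X) (k : ℕ) (h : k + 1 < n),
    z = FreeAbelianGroup.of c +
      FreeAbelianGroup.of (transpCube c ⟨k, by omega⟩ ⟨k + 1, h⟩) }

/-!
For `j ∉ {k, k+1}`, the `j`-th face of `σ ∘ φ_k` is the `j`-th face of `σ` composed with an
adjacent transposition, so the `j`-th terms of `∂σ + ∂(σ ∘ φ_k)` are generators of `D^⊠`. The
`k`-th and `(k+1)`-st faces of `σ ∘ φ_k` are the `(k+1)`-st and `k`-th faces of `σ`, so the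
remaining two terms agree up to the opposite signs `(-1)^(k+1)`, `(-1)^(k+2)` and cancel.
-/

namespace Fin

variable {β : Type*} {n : ℕ}

theorem insertNth_comp_swap_succAbove (p : Fin (n + 1)) (x : β) (t : Fin n → β) (a b : Fin n) :
    insertNth p x t ∘ Equiv.swap (p.succAbove a) (p.succAbove b) =
      insertNth p x (t ∘ Equiv.swap a b) := by
  rw [eq_comm, insertNth_eq_iff]
  refine ⟨?_, funext fun j => ?_⟩
  · simp [Equiv.swap_apply_of_ne_of_ne]
  · simp [removeNth, ← succAbove_right_injective.map_swap]

theorem succ_succAbove_of_ne (i j : Fin n) (h : j ≠ i) :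
    i.succ.succAbove j = i.castSucc.succAbove j := by
  rw [Fin.ne_iff_vne] at h
  ext
  simp only [succAbove, lt_def, val_castSucc, val_succ]
  split_ifs <;> simp <;> omega

theorem insertNth_castSucc_comp_swap (i : Fin n) (x : β) (t : Fin n → β) :
    insertNth i.castSucc x t ∘ Equiv.swap i.castSucc i.succ = insertNth i.succ x t := by
  rw [eq_insertNth_iff]
  refine ⟨by simp, funext fun j => ?_⟩
  by_cases hj : j = i
  · subst hj
    simp only [removeNth_apply, Function.comp_apply, succAbove_succ_self, Equiv.swap_apply_left]
    rw [← succAbove_castSucc_self, insertNth_apply_succAbove]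
  · rw [removeNth_apply, Function.comp_apply, succ_succAbove_of_ne _ _ hj, ← succAbove_castSucc_self,
      Equiv.swap_apply_of_ne_of_ne (succAbove_ne _ _) (succAbove_right_injective.ne hj)]
    simp

theorem exists_succAbove_eq_castSucc_succ (i : Fin n) (j : Fin (n + 1)) (h₀ : j ≠ i.castSucc)
    (h₁ : j ≠ i.succ) : ∃ (m : ℕ) (h : m + 1 < n),
      j.succAbove ⟨m, by omega⟩ = i.castSucc ∧ j.succAbove ⟨m + 1, h⟩ = i.succ := by
  rw [Fin.ne_iff_vne, val_castSucc] at h₀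
  rw [Fin.ne_iff_vne, val_succ] at h₁
  rcases lt_or_gt_of_ne h₀ with hj | hj
  · refine ⟨i - 1, by omega, ?_, ?_⟩
    all_goals ext; simp only [succAbove, lt_def]; split_ifs <;> simp_all <;> omega
  · refine ⟨i, by omega, ?_, ?_⟩
    all_goals ext; simp only [succAbove, lt_def]; split_ifs <;> simp_all <;> omega

end Fin

section Cubes

variable {X : Type*} [TopologicalSpace X] {n : ℕ}

open FreeAbelianGroup

theorem transpCube_transpCube (c : Cube n X) (a b : Fin n) :
    transpCube (transpCube c a b) a b = c := by
  ext t
  simp [transpCube, Function.comp_def, Equiv.swap_apply_self]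

theorem cubeFace_transpCube_succAbove (c : Cube (n + 1) X) (p : Fin (n + 1)) (a b : Fin n)
    (ε : I) :
    cubeFace (transpCube c (p.succAbove a) (p.succAbove b)) p ε =
      transpCube (cubeFace c p ε) a b := by
  ext t
  exact congrArg c (Fin.insertNth_comp_swap_succAbove p ε t a b)

theorem cubeFace_transpCube_castSucc (c : Cube (n + 1) X) (i : Fin n) (ε : I) :
    cubeFace (transpCube c i.castSucc i.succ) i.castSucc ε = cubeFace c i.succ ε := by
  ext t
  exact congrArg c (Fin.insertNth_castSucc_comp_swap i ε t)

theorem cubeFace_transpCube_succ (c : Cube (n + 1) X) (i : Fin n) (ε : I) :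
    cubeFace (transpCube c i.castSucc i.succ) i.succ ε = cubeFace c i.castSucc ε := by
  conv_rhs => rw [← transpCube_transpCube c i.castSucc i.succ]
  rw [cubeFace_transpCube_castSucc]

theorem cubeBoundary_of (c : Cube (n + 1) X) :
    cubeBoundary X n (of c) =
      ∑ k : Fin (n + 1), (-1 : ℤ) ^ ((k : ℕ) + 1) • (of (cubeFace c k 0) - of (cubeFace c k 1)) :=
  lift_apply_of _ _

theorem of_add_of_transpCube_mem_dboxslash (c : Cube n X) (m : ℕ) (h : m + 1 < n) :
    of c + of (transpCube c ⟨m, by omega⟩ ⟨m + 1, h⟩) ∈ Dboxslash X n :=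
  AddSubgroup.subset_closure ⟨c, m, h, rfl⟩

theorem cubeBoundary_of_add_of_transpCube_mem_dboxslash (c : Cube (n + 1) X) (i : Fin n) :
    cubeBoundary X n (of c + of (transpCube c i.castSucc i.succ)) ∈ Dboxslash X n := by
  set τ := transpCube c i.castSucc i.succ
  set term : Fin (n + 1) → FreeAbelianGroup (Cube n X) := fun j =>
    (-1 : ℤ) ^ ((j : ℕ) + 1) •
      ((of (cubeFace c j 0) + of (cubeFace τ j 0)) - (of (cubeFace c j 1) + of (cubeFace τ j 1)))
  have hsum : cubeBoundary X n (of c + of τ) = ∑ j, term j := by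
    simp only [map_add, cubeBoundary_of, ← Finset.sum_add_distrib, ← smul_add, term,
      sub_add_sub_comm]
  have hpair : term i.castSucc + term i.succ = 0 := by
    simp only [term, cubeFace_transpCube_castSucc, cubeFace_transpCube_succ, τ, Fin.val_castSucc,
      Fin.val_succ, pow_succ _ (i + 1)]
    rw [add_comm (of (cubeFace c i.castSucc 0)), add_comm (of (cubeFace c i.castSucc 1))]
    simp
  have hrest : ∀ j ∈ (Finset.univ.erase i.castSucc).erase i.succ, term j ∈ Dboxslash X n := by
    intro j hj
    obtain ⟨m, hm, h₀, h₁⟩ := Fin.exists_succAbove_eq_castSucc_succ i j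
      (Finset.ne_of_mem_erase (Finset.mem_of_mem_erase hj)) (Finset.ne_of_mem_erase hj)
    simp only [term, τ, ← h₀, ← h₁, cubeFace_transpCube_succAbove]
    exact zsmul_mem (sub_mem (of_add_of_transpCube_mem_dboxslash _ m hm)
      (of_add_of_transpCube_mem_dboxslash _ m hm)) _
  rw [hsum, ← Finset.add_sum_erase _ _ (Finset.mem_univ i.castSucc),
    ← Finset.add_sum_erase _ _ (Finset.mem_erase.2 ⟨Fin.castSucc_lt_succ.ne', Finset.mem_univ _⟩),
    ← add_assoc, hpair, zero_add]
  exact AddSubgroup.sum_mem _ hrest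

end Cubes

/-- `D^⊠` is a subcomplex of the normalized cubical chain complex: the boundary of any
generator `σ + σ ∘ φ_k` again lies in `D^⊠` (in the normalized complex, i.e. modulo
degenerate chains). -/
theorem stmt_1 {X : Type*} [TopologicalSpace X] (n : ℕ) (c : Cube (n + 1) X)
    (k : ℕ) (hk : k + 1 < n + 1) :
    cubeBoundary X n
        (FreeAbelianGroup.of c +
          FreeAbelianGroup.of (transpCube c ⟨k, by omega⟩ ⟨k + 1, hk⟩))
      ∈ Dboxslash X n ⊔ DegenSub X n :=
  AddSubgroup.mem_sup_left
    (cubeBoundary_of_add_of_transpCube_mem_dboxslash c (⟨k, by omega⟩ : Fin n))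
end

section
/- Let X be a topological space and let σ_1, σ_2 : [0,1]^i → X be singular cubes that fit together, meaning σ_1 ∘ δ_{i,1} = σ_2 ∘ δ_{i,0}. Let f : [0,1]^{i-1} → [0,1] be continuous with f^{-1}(0) contained in the set where σ_1 is independent of its last coordinate, and f^{-1}(1) contained in the set where σ_2 is independent of its last coordinate. Then the map σ_1 #_f σ_2 : [0,1]^i → X defined by (t_1,…,t_i) ↦ σ_1(t_1,…,t_{i-1}, t_i/f(t_1,…,t_{i-1})) if t_i ≤ f(t_1,…,t_{i-1}) and σ_2(t_1,…,t_{i-1}, (t_i - f)/(1-f)) otherwise, is well-defined and continuous. -/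
/-!
Each half of `σ₁ #_f σ₂` is `σᵢ (t, projIcc (u / v))` for a continuous quotient `u / v`, hence
continuous wherever the denominator `v` (that is `f` or `1 - f`) does not vanish. Where it does
vanish, `σᵢ (t, ·)` is constant, and the tube lemma on the compact factor `[0,1]` makes
`σᵢ (t', s')` close to that constant for all `t'` near `t` and all `s'`, whatever the
(discontinuous) last coordinate is. The halves agree on the graph of `f` because the cubes fit
together, so they glue to a continuous map.
-/

open unitInterval

theorem continuousAt_apply_prodMk_of_forall_eq {Y A B X : Type*} [TopologicalSpace Y]
    [TopologicalSpace A] [TopologicalSpace B] [CompactSpace B] [TopologicalSpace X]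
    (γ : C(A × B, X)) {p : Y → A} (hp : Continuous p) (φ : Y → B) {y : Y}
    (hconst : ∀ b b' : B, γ (p y, b) = γ (p y, b')) :
    ContinuousAt (fun y => γ (p y, φ y)) y := by
  rw [ContinuousAt, tendsto_nhds]
  intro V hV hyV
  have hslice : ({p y} : Set A) ×ˢ (Set.univ : Set B) ⊆ γ ⁻¹' V := by
    rintro ⟨a, b⟩ ⟨rfl, -⟩
    simpa only [Set.mem_preimage, hconst b (φ y)] using hyV
  obtain ⟨U, W, hU, -, hpU, hBW, hUW⟩ :=
    generalized_tube_lemma isCompact_singleton isCompact_univ (hV.preimage γ.continuous) hslice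
  filter_upwards [(hU.preimage hp).mem_nhds (hpU rfl)] with y' hy'
  exact hUW ⟨hy', hBW (Set.mem_univ _)⟩

theorem continuous_apply_projIcc_div {Y A X : Type*} [TopologicalSpace Y] [TopologicalSpace A]
    [TopologicalSpace X] (γ : C(A × I, X)) {p : Y → A} (hp : Continuous p) {u v : Y → ℝ}
    (hu : Continuous u) (hv : Continuous v)
    (hconst : ∀ y, v y = 0 → ∀ s s' : I, γ (p y, s) = γ (p y, s')) :
    Continuous fun y => γ (p y, Set.projIcc 0 1 zero_le_one (u y / v y)) := by
  refine continuous_iff_continuousAt.2 fun y => ?_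
  by_cases hvy : v y = 0
  · exact continuousAt_apply_prodMk_of_forall_eq γ hp _ (hconst y hvy)
  · exact γ.continuous.continuousAt.comp <| hp.continuousAt.prodMk <|
      continuous_projIcc.continuousAt.comp <| hu.continuousAt.div hv.continuousAt hvy

/-- Splitting/gluing of singular cubes: if `σ₁, σ₂ : [0,1]^{n} × [0,1] → X` are singular
cubes which fit together (`σ₁(·,1) = σ₂(·,0)`), and `f : [0,1]^n → [0,1]` is continuous with
`f⁻¹(0)` contained in the set where `σ₁` is independent of its last coordinate and `f⁻¹(1)`
contained in the set where `σ₂` is independent of its last coordinate, then the glued cube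
`σ₁ #_f σ₂`, rescaled by `f` in the last coordinate, is well defined and continuous. -/
theorem stmt_8 {X : Type*} [TopologicalSpace X] (n : ℕ)
    (σ₁ σ₂ : C((Fin n → I) × I, X))
    (hfit : ∀ t : Fin n → I, σ₁ (t, 1) = σ₂ (t, 0))
    (f : C((Fin n → I), I))
    (h0 : ∀ t : Fin n → I, f t = 0 → ∀ s s' : I, σ₁ (t, s) = σ₁ (t, s'))
    (h1 : ∀ t : Fin n → I, f t = 1 → ∀ s s' : I, σ₂ (t, s) = σ₂ (t, s')) :
    ∃ g : (Fin n → I) × I → X,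
      Continuous g ∧
      (∀ (t : Fin n → I) (s : I), (0 : ℝ) < f t → (s : ℝ) ≤ f t →
        g (t, s) = σ₁ (t, Set.projIcc 0 1 zero_le_one ((s : ℝ) / (f t : ℝ)))) ∧
      (∀ (t : Fin n → I) (s : I), (f t : ℝ) ≤ s → (f t : ℝ) < 1 →
        g (t, s) = σ₂ (t, Set.projIcc 0 1 zero_le_one (((s : ℝ) - (f t : ℝ)) / (1 - (f t : ℝ))))) := by
  set F : (Fin n → I) × I → X := fun x =>
    σ₁ (x.1, Set.projIcc 0 1 zero_le_one ((x.2 : ℝ) / (f x.1 : ℝ)))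
  set G : (Fin n → I) × I → X := fun x =>
    σ₂ (x.1, Set.projIcc 0 1 zero_le_one (((x.2 : ℝ) - (f x.1 : ℝ)) / (1 - (f x.1 : ℝ))))
  have hs : Continuous fun x : (Fin n → I) × I => (x.2 : ℝ) := by fun_prop
  have hf : Continuous fun x : (Fin n → I) × I => (f x.1 : ℝ) := by fun_prop
  have hF : Continuous F := continuous_apply_projIcc_div σ₁ continuous_fst hs hf
    fun x hx => h0 x.1 (Subtype.ext hx)
  have hG : Continuous G := continuous_apply_projIcc_div σ₂ continuous_fst (hs.sub hf)
    (continuous_const.sub hf) fun x hx => h1 x.1 (Subtype.ext (sub_eq_zero.1 hx).symm)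
  have hFG : ∀ x : (Fin n → I) × I, (x.2 : ℝ) = f x.1 → F x = G x := by
    rintro ⟨t, s⟩ (hst : (s : ℝ) = f t)
    have hG0 : G (t, s) = σ₂ (t, 0) := by simp [G, hst]
    rw [hG0, ← hfit]
    by_cases hft : (f t : ℝ) = 0
    · exact h0 t (Subtype.ext hft) _ 1
    · simp [F, hst, div_self hft]
  refine ⟨fun x => if (x.2 : ℝ) ≤ f x.1 then F x else G x, hF.if_le hG hs hf hFG,
    fun t s _ hst => if_pos hst, fun t s hst _ => ?_⟩
  by_cases hle : (s : ℝ) ≤ f t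
  · exact (if_pos hle).trans (hFG (t, s) (le_antisymm hle hst))
  · exact if_neg hle
end
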